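/- Let R be a commutative ring with unity such that every finitely generated torsion-free R-module is projective. Let ν be a nilpotent R-linear endomorphism of R^n. Then for every i ≥ 0, the inclusion ker(ν^i) ⊆ ker(ν^{i+1}) splits; that is, ker(ν^i) is a direct summand of ker(ν^{i+1}), so ker(ν^{i+1}) is R-linearly isomorphic to ker(ν^i) ⊕ (ker(ν^{i+1})/ker(ν^i)). -/

import Mathlib

open LinearMap

lemma exists_isCompl_of_projective_quot {R : Type*} [CommRing R] {M : Type*}
    [AddCommGroup M] [Module R M] (p : Submodule R M)
    (hproj : Module.Projective R (M ⧸ p)) : ∃ q : Submodule R M, IsCompl p q := by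
  obtain ⟨g, hg⟩ := Module.projective_lifting_property p.mkQ (LinearMap.id)
    p.mkQ_surjective
  have hmem : ∀ x : M, x - g (p.mkQ x) ∈ p := by
    intro x
    rw [← Submodule.Quotient.mk_eq_zero, Submodule.Quotient.mk_sub]
    have := LinearMap.congr_fun hg (p.mkQ x)
    simp only [LinearMap.comp_apply, LinearMap.id_apply, Submodule.mkQ_apply] at this ⊢
    rw [this, sub_self]
  let f : M →ₗ[R] p := LinearMap.codRestrict p (LinearMap.id - g ∘ₗ p.mkQ)
    (fun x => hmem x)
  have hf : ∀ x : p, f x = x := by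
    intro x
    ext
    simp only [f, LinearMap.codRestrict_apply, LinearMap.sub_apply, LinearMap.id_apply,
      LinearMap.comp_apply]
    have : p.mkQ (x : M) = 0 := (Submodule.Quotient.mk_eq_zero p).2 x.2
    rw [Submodule.mkQ_apply] at this
    rw [Submodule.mkQ_apply, this, map_zero, sub_zero]
  exact ⟨LinearMap.ker f, LinearMap.isCompl_of_proj hf⟩

/-- Let `R` be a commutative ring with unity such that every finitely generated
torsion-free `R`-module is projective. Let `ν` be a nilpotent `R`-linear endomorphism
of `R^n`. Then for every `i ≥ 0`, the inclusion `ker(ν^i) ⊆ ker(ν^{i+1})` splits: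
`ker(ν^i)` is a direct summand of `ker(ν^{i+1})`, so that `ker(ν^{i+1})` is `R`-linearly
isomorphic to `ker(ν^i) ⊕ (ker(ν^{i+1})/ker(ν^i))`. -/
theorem stmt3.{u} {R : Type u} [CommRing R]
    (hR : ∀ (M : Type u) [AddCommGroup M] [Module R M], Module.Finite R M →
      (∀ r ∈ nonZeroDivisors R, ∀ x : M, r • x = 0 → x = 0) → Module.Projective R M)
    (n : ℕ) (ν : (Fin n → R) →ₗ[R] (Fin n → R)) (hν : IsNilpotent ν) (i : ℕ) :
    (∃ q : Submodule R (LinearMap.ker (ν ^ (i + 1))),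
        IsCompl ((LinearMap.ker (ν ^ i)).comap (LinearMap.ker (ν ^ (i + 1))).subtype) q) ∧
    Nonempty ((LinearMap.ker (ν ^ (i + 1))) ≃ₗ[R]
        (LinearMap.ker (ν ^ i)) ×
          (LinearMap.ker (ν ^ (i + 1)) ⧸
            (LinearMap.ker (ν ^ i)).comap (LinearMap.ker (ν ^ (i + 1))).subtype)) := by
  classical
  set K := LinearMap.ker (ν ^ (i + 1)) with hK
  set p := (LinearMap.ker (ν ^ i)).comap K.subtype with hp
  -- Step 1: the range of ν^(i+1) is f.g. and torsion-free, hence projective.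
  have hrange_fin : Module.Finite R (LinearMap.range (ν ^ (i + 1))) :=
    Module.Finite.range (ν ^ (i + 1))
  have hrange_tf : ∀ r ∈ nonZeroDivisors R, ∀ x : LinearMap.range (ν ^ (i + 1)),
      r • x = 0 → x = 0 := by
    intro r hr x hx
    ext j
    have h0 : r • (x : Fin n → R) = 0 := by
      have := congrArg Subtype.val hx
      simpa using this
    have := congrFun h0 j
    simp only [Pi.smul_apply, smul_eq_mul, Pi.zero_apply] at this
    exact mem_nonZeroDivisors_iff_right.mp hr _ (by rwa [mul_comm] at this)
  haveI hrange_proj : Module.Projective R (LinearMap.range (ν ^ (i + 1))) :=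
    hR _ hrange_fin hrange_tf
  -- Step 2: the sequence 0 → K → R^n → range → 0 splits, so K is f.g.
  have hKfin : Module.Finite R K := by
    obtain ⟨q, hq⟩ := exists_isCompl_of_projective_quot K
      (Module.Projective.of_equiv ((ν ^ (i + 1)).quotKerEquivRange).symm)
    exact Module.Finite.of_surjective (K.linearProjOfIsCompl q hq)
      (fun x => ⟨x, Submodule.linearProjOfIsCompl_apply_left hq x⟩)
  -- Step 3: the quotient K ⧸ p is f.g. and torsion-free, hence projective.
  have hQfin : Module.Finite R (K ⧸ p) := Module.Finite.quotient R p
  have hQtf : ∀ r ∈ nonZeroDivisors R, ∀ x : K ⧸ p, r • x = 0 → x = 0 := by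
    intro r hr x hx
    obtain ⟨y, rfl⟩ := Submodule.Quotient.mk_surjective p x
    rw [← Submodule.Quotient.mk_smul, Submodule.Quotient.mk_eq_zero] at hx
    rw [Submodule.Quotient.mk_eq_zero]
    -- hx : r • y ∈ p, i.e. ν^i (r • (y:Fin n → R)) = 0
    have hx' : (ν ^ i) (r • (y : Fin n → R)) = 0 := hx
    rw [map_smul] at hx'
    have : (ν ^ i) (y : Fin n → R) = 0 := by
      ext j
      have := congrFun hx' j
      simp only [Pi.smul_apply, smul_eq_mul, Pi.zero_apply] at this
      exact mem_nonZeroDivisors_iff_right.mp hr _ (by rwa [mul_comm] at this)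
    exact this
  have hQproj : Module.Projective R (K ⧸ p) := hR _ hQfin hQtf
  obtain ⟨q, hq⟩ := exists_isCompl_of_projective_quot p hQproj
  refine ⟨⟨q, hq⟩, ⟨?_⟩⟩
  have hle : LinearMap.ker (ν ^ i) ≤ K := by
    intro x hx
    have hx' : (ν ^ i) x = 0 := hx
    show (ν ^ (i + 1)) x = 0
    rw [pow_succ', Module.End.mul_apply, hx', map_zero]
  exact (Submodule.prodEquivOfIsCompl p q hq).symm.trans
    (LinearEquiv.prodCongr (Submodule.comapSubtypeEquivOfLe hle)
      (Submodule.quotientEquivOfIsCompl p q hq).symm)
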